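/- Let 0 = t_0 < t_1 < ⋯ < t_n = T and let X be a process such that X_{t_i} ≥ 0 for every i and such that the finite sequence (X_{t_i})_{i=0}^{n} is a supermartingale with respect to (𝓕_{t_i})_{i=0}^{n} under every P ∈ 𝒫. Let 0 < a < b, and let D_a^b[X,n] denote the number of downcrossings of the interval [a,b] by (X_{t_0},…,X_{t_n}), i.e. the largest k for which there exist indices 0 ≤ i_1 < j_1 < i_2 < j_2 < ⋯ < i_k < j_k ≤ n with X_{t_{i_m}} ≥ b and X_{t_{j_m}} ≤ a for every m = 1,…,k (and D_a^b[X,n] = 0 if no such indices exist). Then sup_{P∈𝒫} E_P[ D_a^b[X,n] ] ≤ (1/(b−a)) · sup_{P∈𝒫} E_P[ X_{t_0} ∧ b ]. -/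

import Mathlib

open MeasureTheory Filter Set
open scoped ENNReal

namespace DownXAux

/-- State machine: "currently in a downcrossing attempt". -/
def SS (y : ℕ → ℝ) (a b : ℝ) : ℕ → Prop
  | 0 => b ≤ y 0
  | (i+1) => (SS y a b i ∧ a < y (i+1)) ∨ (¬ SS y a b i ∧ b ≤ y (i+1))

open Classical in
/-- Number of completed downcrossings among the first `m` steps. -/
noncomputable def cnt (y : ℕ → ℝ) (a b : ℝ) (m : ℕ) : ℕ :=
  ((Finset.range m).filter (fun r => SS y a b r ∧ y (r+1) ≤ a)).card

lemma SS_of_le {y : ℕ → ℝ} {a b : ℝ} (hab : a < b) {p : ℕ} (h : b ≤ y p) :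
    SS y a b p := by
  cases p with
  | zero => exact h
  | succ q =>
    by_cases hq : SS y a b q
    · exact Or.inl ⟨hq, lt_of_lt_of_le hab h⟩
    · exact Or.inr ⟨hq, h⟩

lemma SS_persist {y : ℕ → ℝ} {a b : ℝ} (d : ℕ) {p : ℕ} (h : SS y a b p)
    (hmid : ∀ r, p ≤ r → r < p + d → a < y (r+1)) : SS y a b (p + d) := by
  induction d with
  | zero => exact h
  | succ e ih =>
    have h1 : SS y a b (p + e) := ih (fun r hr hr' => hmid r hr (hr'.trans (by omega)))
    exact Or.inl ⟨h1, hmid (p + e) (by omega) (by omega)⟩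

open Classical in
lemma pathwise (y : ℕ → ℝ) (a b : ℝ) (m : ℕ) :
    ∑ i ∈ Finset.range m,
        (if SS y a b i then (1:ℝ) else 0) * (min (y (i+1)) b - min (y i) b)
      ≤ -(b-a) * (cnt y a b m : ℝ) + (if SS y a b m then min (y m) b - b else 0) := by
  induction m with
  | zero =>
    simp only [Finset.range_zero, Finset.sum_empty, cnt, Finset.filter_empty,
      Finset.card_empty, Nat.cast_zero, mul_zero, neg_zero, zero_add]
    by_cases h : SS y a b 0
    · have : min (y 0) b = b := min_eq_right h
      simp [h, this]
    · simp [h]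
  | succ m ih =>
    have hcnt : (cnt y a b (m+1) : ℝ)
        = (cnt y a b m : ℝ) + (if SS y a b m ∧ y (m+1) ≤ a then 1 else 0) := by
      unfold cnt
      rw [Finset.range_add_one, Finset.filter_insert]
      by_cases h : SS y a b m ∧ y (m+1) ≤ a
      · rw [if_pos h, Finset.card_insert_of_notMem (by simp)]
        simp [h]
      · rw [if_neg h]
        simp [h]
    rw [Finset.sum_range_succ, hcnt]
    by_cases hm : SS y a b m
    · by_cases hy : y (m+1) ≤ a
      · have hS1 : ¬ SS y a b (m+1) := by
          intro hc
          rcases hc with ⟨_, h2⟩ | ⟨h1, h2⟩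
          · exact absurd hy (not_le.mpr h2)
          · exact h1 hm
        have hmin : min (y (m+1)) b ≤ a := le_trans (min_le_left _ _) hy
        simp only [if_pos hm, if_neg hS1, if_pos (⟨hm, hy⟩ : SS y a b m ∧ y (m+1) ≤ a)]
        simp only [if_pos hm] at ih
        nlinarith [ih]
      · have hS1 : SS y a b (m+1) := Or.inl ⟨hm, not_le.mp hy⟩
        simp only [if_pos hm, if_pos hS1,
          if_neg (fun h : SS y a b m ∧ y (m+1) ≤ a => hy h.2)]
        simp only [if_pos hm] at ih
        nlinarith [ih]
    · have hnot : ¬ (SS y a b m ∧ y (m+1) ≤ a) := fun h => hm h.1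
      simp only [if_neg hm, if_neg hnot, zero_mul, add_zero]
      simp only [if_neg hm] at ih
      by_cases hS1 : SS y a b (m+1)
      · have hb : b ≤ y (m+1) := by
          rcases hS1 with ⟨h1, _⟩ | ⟨_, h2⟩
          · exact absurd h1 hm
          · exact h2
        have : min (y (m+1)) b = b := min_eq_right hb
        simp only [if_pos hS1, this]
        linarith [ih]
      · simp only [if_neg hS1]
        linarith [ih]

open Classical in
lemma le_cnt (y : ℕ → ℝ) (a b : ℝ) (hab : a < b) (n k : ℕ) (i j : ℕ → ℕ)
    (h1 : ∀ m, m < k → i m < j m) (h2 : ∀ m, m + 1 < k → j m < i (m + 1))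
    (h3 : ∀ m, m < k → j m ≤ n) (h4 : ∀ m, m < k → b ≤ y (i m) ∧ y (j m) ≤ a) :
    k ≤ cnt y a b n := by
  have ex : ∀ m, m < k → ∃ r, i m ≤ r ∧ y (r+1) ≤ a := by
    intro m hm
    have hij := h1 m hm
    refine ⟨j m - 1, by omega, ?_⟩
    have : j m - 1 + 1 = j m := by omega
    rw [this]; exact (h4 m hm).2
  set N : ℕ → ℕ := fun m => if h : m < k then Nat.find (ex m h) else 0 with hN
  have hNspec : ∀ m (hm : m < k), i m ≤ N m ∧ y (N m + 1) ≤ a := by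
    intro m hm
    simp only [hN, dif_pos hm]
    exact Nat.find_spec (ex m hm)
  have hNlt : ∀ m (hm : m < k), N m < j m := by
    intro m hm
    have : N m ≤ j m - 1 := by
      simp only [hN, dif_pos hm]
      apply Nat.find_le
      have hij := h1 m hm
      refine ⟨by omega, ?_⟩
      have : j m - 1 + 1 = j m := by omega
      rw [this]; exact (h4 m hm).2
    have := h1 m hm; omega
  have hNmem : ∀ m (hm : m < k), SS y a b (N m) ∧ y (N m + 1) ≤ a ∧ N m < n := by
    intro m hm
    refine ⟨?_, (hNspec m hm).2, by have := hNlt m hm; have := h3 m hm; omega⟩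
    have hbase : SS y a b (i m) := SS_of_le hab (h4 m hm).1
    have hd : N m = i m + (N m - i m) := by have := (hNspec m hm).1; omega
    rw [hd]
    apply SS_persist _ hbase
    intro r hr hr'
    by_contra hcon
    push_neg at hcon
    have hrlt : r < N m := by omega
    have := Nat.find_min (ex m hm) (by simpa only [hN, dif_pos hm] using hrlt)
    exact this ⟨hr, hcon⟩
  have hmono : ∀ m m', m < m' → m' < k → N m < N m' := by
    intro m m' hlt hkk
    induction m' with
    | zero => omega
    | succ p ih =>
      have hp : N p < N (p+1) := by
        calc N p < j p := hNlt p (by omega)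
        _ < i (p+1) := h2 p hkk
        _ ≤ N (p+1) := (hNspec (p+1) hkk).1
      rcases Nat.lt_succ_iff_lt_or_eq.mp hlt with h | h
      · exact lt_trans (ih h (by omega)) hp
      · rw [h] at *; exact hp
  calc k = (Finset.range k).card := (Finset.card_range k).symm
  _ ≤ ((Finset.range n).filter (fun r => SS y a b r ∧ y (r+1) ≤ a)).card := by
      apply Finset.card_le_card_of_injOn N
      · intro m hm
        simp only [Finset.coe_range, Set.mem_Iio] at hm
        obtain ⟨hS, hya, hlt⟩ := hNmem m hm
        simp only [Finset.mem_coe, Finset.mem_filter, Finset.mem_range]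
        exact ⟨hlt, hS, hya⟩
      · intro m hm m' hm' heq
        simp only [Finset.coe_range, Set.mem_Iio] at hm hm'
        by_contra hne
        rcases Nat.lt_or_ge m m' with h | h
        · exact absurd heq (Nat.ne_of_lt (hmono m m' h hm'))
        · have : m' < m := by omega
          exact absurd heq.symm (Nat.ne_of_lt (hmono m' m this hm))
  _ = cnt y a b n := rfl

lemma transform_le {Ω : Type*} {mΩ : MeasurableSpace Ω} (μ : Measure Ω)
    [IsProbabilityMeasure μ] {m : MeasurableSpace Ω} (hm : m ≤ mΩ)
    {g f : Ω → ℝ} (hg : StronglyMeasurable[m] g) (hg1 : ∀ ω, ‖g ω‖ ≤ 1)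
    (hf : Integrable f μ) (hcond : ∀ᵐ ω ∂μ, (μ[f | m]) ω ≤ 0)
    (hgpos : ∀ ω, 0 ≤ g ω) :
    ∫ ω, g ω * f ω ∂μ ≤ 0 := by
  have hgf : Integrable (g * f) μ :=
    hf.bdd_mul ((hg.mono hm).aestronglyMeasurable) (Filter.Eventually.of_forall hg1)
  have h1 : μ[g * f | m] =ᵐ[μ] g * μ[f | m] :=
    condExp_mul_of_stronglyMeasurable_left hg hgf hf
  calc ∫ ω, g ω * f ω ∂μ = ∫ ω, (μ[g * f | m]) ω ∂μ := (integral_condExp hm).symm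
  _ = ∫ ω, (g * μ[f | m]) ω ∂μ := integral_congr_ae h1
  _ ≤ 0 := by
      apply integral_nonpos_of_ae
      filter_upwards [hcond] with ω hω
      exact mul_nonpos_of_nonneg_of_nonpos (hgpos ω) hω

open Classical in
lemma master (y : ℕ → ℝ) (a b : ℝ) (n : ℕ) (hyn : 0 ≤ y n) (hb : 0 ≤ b) :
    (b - a) * (cnt y a b n : ℝ)
      ≤ (∑ i ∈ Finset.range n,
          (1 - (if SS y a b i then (1:ℝ) else 0)) * (min (y (i+1)) b - min (y i) b))
        + min (y 0) b := by
  have hp := pathwise y a b n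
  have htel : ∑ i ∈ Finset.range n, (min (y (i+1)) b - min (y i) b)
      = min (y n) b - min (y 0) b := Finset.sum_range_sub (fun i => min (y i) b) n
  have hsplit : ∑ i ∈ Finset.range n,
        (1 - (if SS y a b i then (1:ℝ) else 0)) * (min (y (i+1)) b - min (y i) b)
      = (∑ i ∈ Finset.range n, (min (y (i+1)) b - min (y i) b))
        - ∑ i ∈ Finset.range n,
            (if SS y a b i then (1:ℝ) else 0) * (min (y (i+1)) b - min (y i) b) := by
    rw [← Finset.sum_sub_distrib]
    exact Finset.sum_congr rfl fun i _ => by ring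
  have hR : (if SS y a b n then min (y n) b - b else 0) ≤ 0 := by
    split
    · linarith [min_le_right (y n) b]
    · exact le_refl 0
  have h0 : 0 ≤ min (y n) b := le_min hyn hb
  rw [hsplit, htel]
  linarith [hp]


variable {Ω : Type*} {mΩ : MeasurableSpace Ω}


lemma SS_measurableSet (𝓕 : Filtration ℝ mΩ) (n : ℕ) (t : ℕ → ℝ)
    (htmono : StrictMonoOn t (Set.Iic n)) (Y : ℕ → Ω → ℝ)
    (hadapt : ∀ i ≤ n, StronglyMeasurable[𝓕 (t i)] (Y i)) (a b : ℝ) :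
    ∀ r, r ≤ n → MeasurableSet[𝓕 (t r)] {ω | SS (fun p => Y p ω) a b r} := by
  intro r
  induction r with
  | zero =>
    intro _
    have h0 : {ω | SS (fun p => Y p ω) a b 0} = {ω | b ≤ Y 0 ω} := rfl
    rw [h0]
    exact measurableSet_le measurable_const (hadapt 0 (Nat.zero_le n)).measurable
  | succ r ih =>
    intro hr
    have hrn : r ≤ n := by omega
    have hmle : 𝓕 (t r) ≤ 𝓕 (t (r+1)) :=
      𝓕.mono (le_of_lt (htmono (Set.mem_Iic.2 (by exact_mod_cast hrn))
        (Set.mem_Iic.2 (by exact_mod_cast hr)) (by omega)))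
    have hSr : MeasurableSet[𝓕 (t (r+1))] {ω | SS (fun p => Y p ω) a b r} :=
      hmle _ (ih hrn)
    have hYm := (hadapt (r+1) hr).measurable
    have hset : {ω | SS (fun p => Y p ω) a b (r+1)}
        = ({ω | SS (fun p => Y p ω) a b r} ∩ {ω | a < Y (r+1) ω})
          ∪ ({ω | SS (fun p => Y p ω) a b r}ᶜ ∩ {ω | b ≤ Y (r+1) ω}) := by
      ext ω
      simp only [Set.mem_union, Set.mem_inter_iff, Set.mem_setOf_eq, Set.mem_compl_iff, SS]
    rw [hset]
    exact (hSr.inter (measurableSet_lt measurable_const hYm)).union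
      (hSr.compl.inter (measurableSet_le measurable_const hYm))

open Classical in
lemma cnt_eq_sum (Y : ℕ → Ω → ℝ) (a b : ℝ) (n : ℕ) (ω : Ω) :
    ((cnt (fun p => Y p ω) a b n : ℝ))
      = ∑ r ∈ Finset.range n,
          (if SS (fun p => Y p ω) a b r ∧ Y (r+1) ω ≤ a then (1:ℝ) else 0) := by
  rw [cnt, Finset.card_filter]
  push_cast
  rfl

open Classical in
lemma cnt_integrable (𝓕 : Filtration ℝ mΩ) (μ : Measure Ω) [IsProbabilityMeasure μ]
    (n : ℕ) (t : ℕ → ℝ) (htmono : StrictMonoOn t (Set.Iic n)) (Y : ℕ → Ω → ℝ)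
    (hadapt : ∀ i ≤ n, StronglyMeasurable[𝓕 (t i)] (Y i)) (a b : ℝ) :
    Integrable (fun ω => ((cnt (fun p => Y p ω) a b n : ℝ))) μ := by
  have heq : (fun ω => ((cnt (fun p => Y p ω) a b n : ℝ)))
      = fun ω => ∑ r ∈ Finset.range n,
          (if SS (fun p => Y p ω) a b r ∧ Y (r+1) ω ≤ a then (1:ℝ) else 0) := by
    funext ω; exact cnt_eq_sum Y a b n ω
  rw [heq]
  apply integrable_finset_sum
  intro r hr
  rw [Finset.mem_range] at hr
  have hrn : r ≤ n := le_of_lt hr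
  have hr1 : r + 1 ≤ n := hr
  have hA : MeasurableSet {ω | SS (fun p => Y p ω) a b r ∧ Y (r+1) ω ≤ a} := by
    have h1 : MeasurableSet[mΩ] {ω | SS (fun p => Y p ω) a b r} :=
      𝓕.le (t r) _ (SS_measurableSet 𝓕 n t htmono Y hadapt a b r hrn)
    have h2 : MeasurableSet {ω | Y (r+1) ω ≤ a} :=
      measurableSet_le ((hadapt (r+1) hr1).mono (𝓕.le _)).measurable measurable_const
    exact h1.inter h2
  have : (fun ω => if SS (fun p => Y p ω) a b r ∧ Y (r+1) ω ≤ a then (1:ℝ) else 0)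
      = Set.indicator {ω | SS (fun p => Y p ω) a b r ∧ Y (r+1) ω ≤ a} (fun _ => (1:ℝ)) := by
    funext ω
    rw [Set.indicator_apply]
    simp only [Set.mem_setOf_eq]
  rw [this]
  exact (integrable_const (1:ℝ)).indicator hA

end DownXAux

namespace DownXAux
variable {Ω : Type*} {mΩ : MeasurableSpace Ω}

open Classical in
lemma key_integral (𝓕 : Filtration ℝ mΩ) (μ : Measure Ω) [IsProbabilityMeasure μ]
    (n : ℕ) (t : ℕ → ℝ) (htmono : StrictMonoOn t (Set.Iic n))
    (Y : ℕ → Ω → ℝ)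
    (hpos : ∀ i ≤ n, ∀ ω, 0 ≤ Y i ω)
    (hadapt : ∀ i ≤ n, StronglyMeasurable[𝓕 (t i)] (Y i))
    (hint : ∀ i ≤ n, Integrable (Y i) μ)
    (hsuper : ∀ i, i < n → ∀ᵐ ω ∂μ, (μ[Y (i + 1) | 𝓕 (t i)]) ω ≤ Y i ω)
    (a b : ℝ) (ha : 0 < a) (hab : a < b) :
    (b - a) * ∫ ω, ((cnt (fun p => Y p ω) a b n : ℝ)) ∂μ ≤ ∫ ω, min (Y 0 ω) b ∂μ := by
  have hb : (0:ℝ) < b := lt_trans ha hab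
  -- the truncated process
  have hZsm : ∀ i, i ≤ n → StronglyMeasurable[𝓕 (t i)] (fun ω => min (Y i ω) b) :=
    fun i hi => ((hadapt i hi).measurable.min measurable_const).stronglyMeasurable
  have hZint : ∀ i, i ≤ n → Integrable (fun ω => min (Y i ω) b) μ := by
    intro i hi
    refine Integrable.mono' (integrable_const b)
      (((hZsm i hi).mono (𝓕.le _)).aestronglyMeasurable) ?_
    filter_upwards with ω
    rw [Real.norm_eq_abs, abs_le]
    constructor
    · have := hpos i hi ω
      have : (0:ℝ) ≤ min (Y i ω) b := le_min this hb.le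
      linarith
    · exact min_le_right _ _
  -- conditional expectation step
  have hcondZ : ∀ i, i < n →
      ∀ᵐ ω ∂μ, (μ[(fun ω => min (Y (i+1) ω) b) - (fun ω => min (Y i ω) b) | 𝓕 (t i)]) ω ≤ 0 := by
    intro i hi
    have hin : i ≤ n := le_of_lt hi
    have hi1 : i + 1 ≤ n := hi
    have hm : 𝓕 (t i) ≤ mΩ := 𝓕.le _
    have h1 : μ[(fun ω => min (Y (i+1) ω) b) | 𝓕 (t i)] ≤ᵐ[μ] μ[Y (i+1) | 𝓕 (t i)] :=
      condExp_mono (hZint (i+1) hi1) (hint (i+1) hi1)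
        (Filter.Eventually.of_forall fun ω => min_le_left _ _)
    have h2 : μ[(fun ω => min (Y (i+1) ω) b) | 𝓕 (t i)] ≤ᵐ[μ] fun _ => b := by
      have hc : μ[(fun _ : Ω => b) | 𝓕 (t i)] = fun _ => b := condExp_const hm b
      have h := condExp_mono (m := 𝓕 (t i)) (hZint (i+1) hi1) (integrable_const b)
        (Filter.Eventually.of_forall fun ω => min_le_right (Y (i+1) ω) b)
      rw [hc] at h
      exact h
    have hsub : μ[(fun ω => min (Y (i+1) ω) b) - (fun ω => min (Y i ω) b) | 𝓕 (t i)]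
        =ᵐ[μ] μ[(fun ω => min (Y (i+1) ω) b) | 𝓕 (t i)]
          - μ[(fun ω => min (Y i ω) b) | 𝓕 (t i)] :=
      condExp_sub (hZint (i+1) hi1) (hZint i hin) _
    have hZi : μ[(fun ω => min (Y i ω) b) | 𝓕 (t i)] = fun ω => min (Y i ω) b :=
      condExp_of_stronglyMeasurable hm (hZsm i hin) (hZint i hin)
    filter_upwards [h1, h2, hsub, hsuper i hi] with ω e1 e2 e3 e4
    rw [e3, Pi.sub_apply, hZi]
    have hle : (μ[(fun ω => min (Y (i+1) ω) b) | 𝓕 (t i)]) ω ≤ min (Y i ω) b :=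
      le_min (le_trans e1 e4) e2
    simp only
    linarith
  -- each transform term has nonpositive integral
  have hterm_int : ∀ i, i < n → Integrable
      (fun ω => (1 - (if SS (fun p => Y p ω) a b i then (1:ℝ) else 0))
        * (min (Y (i+1) ω) b - min (Y i ω) b)) μ := by
    intro i hi
    refine Integrable.bdd_mul (c := 1) ((hZint (i+1) hi).sub (hZint i (le_of_lt hi))) ?_ ?_
    · have hA : MeasurableSet[𝓕 (t i)] {ω | SS (fun p => Y p ω) a b i} :=
        SS_measurableSet 𝓕 n t htmono Y hadapt a b i (le_of_lt hi)
      have : (fun ω => (1 - (if SS (fun p => Y p ω) a b i then (1:ℝ) else 0)))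
          = fun ω => 1 - Set.indicator {ω | SS (fun p => Y p ω) a b i} (fun _ => (1:ℝ)) ω := by
        funext ω
        rw [Set.indicator_apply]
        simp only [Set.mem_setOf_eq]
      rw [this]
      exact ((stronglyMeasurable_const.sub
        (stronglyMeasurable_const.indicator hA)).mono (𝓕.le _)).aestronglyMeasurable
    · refine Filter.Eventually.of_forall (fun ω => ?_)
      by_cases h : SS (fun p => Y p ω) a b i <;> simp [h]
  have hstep : ∀ i, i < n →
      ∫ ω, (1 - (if SS (fun p => Y p ω) a b i then (1:ℝ) else 0))
        * (min (Y (i+1) ω) b - min (Y i ω) b) ∂μ ≤ 0 := by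
    intro i hi
    have hA : MeasurableSet[𝓕 (t i)] {ω | SS (fun p => Y p ω) a b i} :=
      SS_measurableSet 𝓕 n t htmono Y hadapt a b i (le_of_lt hi)
    have hgind : (fun ω => (1 - (if SS (fun p => Y p ω) a b i then (1:ℝ) else 0)))
        = fun ω => 1 - Set.indicator {ω | SS (fun p => Y p ω) a b i} (fun _ => (1:ℝ)) ω := by
      funext ω
      rw [Set.indicator_apply]
      simp only [Set.mem_setOf_eq]
    have hg : StronglyMeasurable[𝓕 (t i)]
        (fun ω => (1 - (if SS (fun p => Y p ω) a b i then (1:ℝ) else 0))) := by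
      rw [hgind]
      exact stronglyMeasurable_const.sub (stronglyMeasurable_const.indicator hA)
    refine transform_le μ (𝓕.le (t i)) hg ?_
      (((hZint (i+1) hi).sub (hZint i (le_of_lt hi)))) ?_ ?_
    · intro ω
      by_cases h : SS (fun p => Y p ω) a b i <;> simp [h]
    · exact hcondZ i hi
    · intro ω
      by_cases h : SS (fun p => Y p ω) a b i <;> simp [h]
  -- integrate the master inequality
  have hCint : Integrable (fun ω => ((cnt (fun p => Y p ω) a b n : ℝ))) μ :=
    cnt_integrable 𝓕 μ n t htmono Y hadapt a b
  have hsum_int : Integrable (fun ω => ∑ i ∈ Finset.range n,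
      (1 - (if SS (fun p => Y p ω) a b i then (1:ℝ) else 0))
        * (min (Y (i+1) ω) b - min (Y i ω) b)) μ := by
    apply integrable_finset_sum
    intro i hi
    exact hterm_int i (Finset.mem_range.mp hi)
  calc (b - a) * ∫ ω, ((cnt (fun p => Y p ω) a b n : ℝ)) ∂μ
      = ∫ ω, (b - a) * ((cnt (fun p => Y p ω) a b n : ℝ)) ∂μ :=
        (integral_const_mul (b-a) _).symm
  _ ≤ ∫ ω, ((∑ i ∈ Finset.range n,
        (1 - (if SS (fun p => Y p ω) a b i then (1:ℝ) else 0))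
          * (min (Y (i+1) ω) b - min (Y i ω) b)) + min (Y 0 ω) b) ∂μ := by
      apply integral_mono (hCint.const_mul (b-a)) (hsum_int.add (hZint 0 (Nat.zero_le n)))
      intro ω
      exact master (fun p => Y p ω) a b n (hpos n le_rfl ω) hb.le
  _ = (∑ i ∈ Finset.range n, ∫ ω,
        (1 - (if SS (fun p => Y p ω) a b i then (1:ℝ) else 0))
          * (min (Y (i+1) ω) b - min (Y i ω) b) ∂μ) + ∫ ω, min (Y 0 ω) b ∂μ := by
      rw [integral_add hsum_int (hZint 0 (Nat.zero_le n)),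
        integral_finset_sum _ (fun i hi => hterm_int i (Finset.mem_range.mp hi))]
  _ ≤ ∫ ω, min (Y 0 ω) b ∂μ := by
      have hs : (∑ i ∈ Finset.range n, ∫ ω,
          (1 - (if SS (fun p => Y p ω) a b i then (1:ℝ) else 0))
            * (min (Y (i+1) ω) b - min (Y i ω) b) ∂μ) ≤ 0 :=
        Finset.sum_nonpos fun i hi => hstep i (Finset.mem_range.mp hi)
      linarith

end DownXAux


open DownXAux

/-- Downcrossing inequality for processes which are nonnegative supermartingales under every
measure of a family `𝔓`: if `D(ω)` is the number of downcrossings of `[a,b]` by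
`(Y_0(ω), …, Y_n(ω))`, then `sup_P E_P[D] ≤ (b-a)⁻¹ · sup_P E_P[Y_0 ∧ b]`. -/
theorem downcrossing_inequality_sublinear {Ω : Type*} {mΩ : MeasurableSpace Ω}
    (𝓕 : Filtration ℝ mΩ)
    (𝔓 : Set (Measure Ω)) (h𝔓 : 𝔓.Nonempty)
    (hprob : ∀ μ ∈ 𝔓, IsProbabilityMeasure μ)
    (n : ℕ) (hn : 0 < n) (T : ℝ) (t : ℕ → ℝ)
    (ht0 : t 0 = 0) (htmono : StrictMonoOn t (Set.Iic n)) (htn : t n = T)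
    (Y : ℕ → Ω → ℝ)
    (hpos : ∀ i ≤ n, ∀ ω, 0 ≤ Y i ω)
    (hadapt : ∀ i ≤ n, StronglyMeasurable[𝓕 (t i)] (Y i))
    (hint : ∀ μ ∈ 𝔓, ∀ i ≤ n, Integrable (Y i) μ)
    (hsuper : ∀ μ ∈ 𝔓, ∀ i, i < n → ∀ᵐ ω ∂μ, (μ[Y (i + 1) | 𝓕 (t i)]) ω ≤ Y i ω)
    (a b : ℝ) (ha : 0 < a) (hab : a < b)
    (D : Ω → ℕ)
    -- `D ω` is the largest `k` for which there are indices
    -- `i 0 < j 0 < i 1 < j 1 < ⋯ < i (k-1) < j (k-1) ≤ n` with `Y (i m) ω ≥ b` and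
    -- `Y (j m) ω ≤ a` for every `m < k` (and `D ω = 0` if no such indices exist).
    (hD : ∀ ω, D ω = sSup {k : ℕ | ∃ i j : ℕ → ℕ,
      (∀ m, m < k → i m < j m) ∧
      (∀ m, m + 1 < k → j m < i (m + 1)) ∧
      (∀ m, m < k → j m ≤ n) ∧
      (∀ m, m < k → b ≤ Y (i m) ω ∧ Y (j m) ω ≤ a)}) :
    (⨆ μ : 𝔓, ∫ ω, (D ω : ℝ) ∂(μ : Measure Ω))
      ≤ (b - a)⁻¹ * ⨆ μ : 𝔓, ∫ ω, min (Y 0 ω) b ∂(μ : Measure Ω) := by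
  have hba : (0:ℝ) < b - a := sub_pos.2 hab
  have hb : (0:ℝ) < b := lt_trans ha hab
  haveI hne : Nonempty ↥𝔓 := h𝔓.to_subtype
  -- pointwise bound on D
  have hDle : ∀ ω, D ω ≤ cnt (fun p => Y p ω) a b n := by
    intro ω
    rw [hD ω]
    apply csSup_le
    · exact ⟨0, fun _ => 0, fun _ => 0,
        fun m hm => absurd hm (Nat.not_lt_zero m),
        fun m hm => absurd hm (Nat.not_lt_zero (m+1)),
        fun m hm => absurd hm (Nat.not_lt_zero m),
        fun m hm => absurd hm (Nat.not_lt_zero m)⟩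
    · rintro k ⟨i, j, h1, h2, h3, h4⟩
      exact le_cnt (fun p => Y p ω) a b hab n k i j h1 h2 h3 h4
  -- bound on the suprema
  have hbdd : BddAbove (Set.range fun μ : 𝔓 => ∫ ω, min (Y 0 ω) b ∂(μ : Measure Ω)) := by
    refine ⟨b, ?_⟩
    rintro x ⟨⟨ν, hν⟩, rfl⟩
    haveI := hprob ν hν
    have hZint : Integrable (fun ω => min (Y 0 ω) b) ν := by
      refine Integrable.mono' (integrable_const b)
        ((((hadapt 0 (Nat.zero_le n)).measurable.min measurable_const).stronglyMeasurable.mono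
          (𝓕.le _)).aestronglyMeasurable) ?_
      filter_upwards with ω
      rw [Real.norm_eq_abs, abs_le]
      constructor
      · have h0 : (0:ℝ) ≤ min (Y 0 ω) b := le_min (hpos 0 (Nat.zero_le n) ω) hb.le
        linarith
      · exact min_le_right _ _
    calc ∫ ω, min (Y 0 ω) b ∂ν ≤ ∫ _ω, b ∂ν :=
          integral_mono hZint (integrable_const b) (fun ω => min_le_right _ _)
    _ = b := by simp
  apply ciSup_le
  rintro ⟨μ, hμ⟩
  haveI := hprob μ hμ
  have hkey := key_integral 𝓕 μ n t htmono Y hpos hadapt (hint μ hμ)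
    (hsuper μ hμ) a b ha hab
  have hCint : Integrable (fun ω => ((cnt (fun p => Y p ω) a b n : ℝ))) μ :=
    cnt_integrable 𝓕 μ n t htmono Y hadapt a b
  have hDint : ∫ ω, (D ω : ℝ) ∂μ ≤ ∫ ω, ((cnt (fun p => Y p ω) a b n : ℝ)) ∂μ := by
    apply integral_mono_of_nonneg
    · exact Filter.Eventually.of_forall (fun ω => Nat.cast_nonneg _)
    · exact hCint
    · exact Filter.Eventually.of_forall (fun ω => Nat.cast_le.mpr (hDle ω))
  have hsup : ∫ ω, min (Y 0 ω) b ∂μ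
      ≤ ⨆ ν : 𝔓, ∫ ω, min (Y 0 ω) b ∂(ν : Measure Ω) :=
    le_ciSup hbdd (⟨μ, hμ⟩ : 𝔓)
  have h1 : ∫ ω, ((cnt (fun p => Y p ω) a b n : ℝ)) ∂μ
      ≤ (b - a)⁻¹ * ∫ ω, min (Y 0 ω) b ∂μ := by
    have h2 := mul_le_mul_of_nonneg_left hkey (inv_nonneg.2 hba.le)
    rwa [← mul_assoc, inv_mul_cancel₀ hba.ne', one_mul] at h2
  calc ∫ ω, (D ω : ℝ) ∂μ ≤ (b - a)⁻¹ * ∫ ω, min (Y 0 ω) b ∂μ := le_trans hDint h1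
  _ ≤ (b - a)⁻¹ * ⨆ ν : 𝔓, ∫ ω, min (Y 0 ω) b ∂(ν : Measure Ω) :=
      mul_le_mul_of_nonneg_left hsup (inv_nonneg.2 hba.le)
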